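/- Let p be an odd prime, n > 0, and let 𝔥(n) be the free two-step nilpotent F_p-Lie algebra with basis {e_k : 1 ≤ k ≤ n} ∪ {e_{i,j} : 1 ≤ i < j ≤ n}, bracket [e_i, e_j] = e_{i,j} and all e_{i,j} central. Let G(𝔥(n)) be the p-group associated to 𝔥(n) by the exponent-p² construction, with its central Frattini extension 1 → V → G(𝔥(n)) →^π W → 1 where V and W are elementary abelian of rank binomial(n+1,2) and W is identified with 𝔥(n). If S ⊂ W is the subspace spanned by {e_k : 1 ≤ k ≤ n}, then π^{-1}(S) ≅ U(n,p); in particular U(n,p) is isomorphic to a subgroup of G(𝔥(n)) containing Ω1(G(𝔥(n))). -/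

import Mathlib

/-!
STATEMENT 18.  Let `𝔥(n)` be the free two-step nilpotent `𝔽_p`-Lie algebra with basis
`{e_k} ∪ {e_{i,j} : i<j}`, bracket `[e_i,e_j] = e_{i,j}` and the `e_{i,j}` central;
concretely `𝔥(n) = (𝔽_p)^n × (𝔽_p)^{(i<j)}` with bracket
`[(u,a),(v,b)] = (0, (u_i v_j - u_j v_i)_{i<j})`.  Let `G(𝔥(n))` be the `p`-group
obtained from `𝔥(n)` by the exponent-`p²` construction: the free `ℤ/p²`-module `K` of
rank `C(n+1,2)` with multiplication `x·y = x + y + i([π x, π y])`, where `π` is the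
mod-`p` reduction and `i` the "multiply by `p`" injection.  It fits in a central
Frattini extension `1 → V → G(𝔥(n)) →^π W → 1` with `W` identified with `𝔥(n)`.
If `S ⊂ W` is the span of the `e_k`, then `π⁻¹(S) ≅ U(n,p)`; in particular `U(n,p)`
is isomorphic to a subgroup of `G(𝔥(n))` containing `Ω₁(G(𝔥(n)))`.

(`U(n,p)` is, by a dimension count, any central Frattini extension of `(ℤ/p)^n` by
`(ℤ/p)^{C(n+1,2)}`.)
-/

/-- Bundled data of a central extension `1 → V → G → W → 1`. -/
structure CentralExtension (V G W : Type) [Group V] [Group G] [Group W] where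
  ι : V →* G
  π : G →* W
  ι_injective : Function.Injective ι
  π_surjective : Function.Surjective π
  range_eq_ker : ι.range = π.ker
  range_le_center : ι.range ≤ Subgroup.center G

/-- The subgroup `G^p[G,G]`, whose quotient computes `H_1(G; ℤ/p)`. -/
def pPowerCommutatorSubgroup (p : ℕ) (G : Type) [Group G] : Subgroup G :=
  commutator G ⊔ Subgroup.closure {x : G | ∃ g : G, g ^ p = x}

/-- The index set `{(i,j) | 1 ≤ i < j ≤ n}`. -/
abbrev PairIdx (n : ℕ) : Type := {q : Fin n × Fin n // q.1 < q.2}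

/-- The underlying space of the free two-step nilpotent Lie algebra `𝔥(n)` over `𝔽_p`,
with basis `{e_k} ∪ {e_{i,j} : i < j}`. -/
abbrev FreeNilpotent2 (p n : ℕ) : Type := (Fin n → ZMod p) × (PairIdx n → ZMod p)

/-- The Lie bracket of `𝔥(n)`: `[e_i, e_j] = e_{i,j}` with the `e_{i,j}` central. -/
def hnBracket (p n : ℕ) (u v : FreeNilpotent2 p n) : FreeNilpotent2 p n :=
  (0, fun q => u.1 q.val.1 * v.1 q.val.2 - u.1 q.val.2 * v.1 q.val.1)

/-- The free `ℤ/p²`-module underlying `G(𝔥(n))`. -/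
abbrev GhnCarrier (p n : ℕ) : Type := (Fin n → ZMod (p ^ 2)) × (PairIdx n → ZMod (p ^ 2))

/-- The canonical surjection `π : K → 𝔥(n)` (componentwise reduction mod `p`). -/
def ghnProj (p n : ℕ) (k : GhnCarrier p n) : FreeNilpotent2 p n :=
  (fun t => ZMod.castHom (dvd_pow_self p two_ne_zero) (ZMod p) (k.1 t),
   fun q => ZMod.castHom (dvd_pow_self p two_ne_zero) (ZMod p) (k.2 q))

/-- The canonical injection `i : 𝔥(n) → K` (multiplication by `p` on lifts). -/
def ghnInj (p n : ℕ) (l : FreeNilpotent2 p n) : GhnCarrier p n :=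
  (fun t => ((l.1 t).val : ZMod (p ^ 2)) * p, fun q => ((l.2 q).val : ZMod (p ^ 2)) * p)


open scoped commutatorElement
open scoped IsMulCommutative

instance : IsEmpty (PairIdx 0) := ⟨fun q => q.val.1.elim0⟩

noncomputable def pairIdxSuccEquiv (n : ℕ) : (Fin n ⊕ PairIdx n) ≃ PairIdx (n + 1) := by
  refine Equiv.ofBijective
    (fun x => match x with
      | Sum.inl j => ⟨(0, j.succ), j.succ_pos⟩
      | Sum.inr q => ⟨(q.val.1.succ, q.val.2.succ), Fin.succ_lt_succ_iff.mpr q.prop⟩) ⟨?_, ?_⟩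
  · rintro (j | q) (j' | q') h
    · simpa [Fin.succ_inj] using congrArg (fun z => z.val.2) h
    · exact absurd (congrArg (fun z => z.val.1) h) (by simp [Fin.succ_ne_zero, (Fin.succ_ne_zero _).symm, eq_comm])
    · exact absurd (congrArg (fun z => z.val.1) h) (by simp [Fin.succ_ne_zero])
    · have h1 := congrArg (fun z => z.val.1) h
      have h2 := congrArg (fun z => z.val.2) h
      simp only [Fin.succ_inj] at h1 h2
      exact congrArg Sum.inr (Subtype.ext (Prod.ext h1 h2))
  · rintro ⟨⟨i, j⟩, hij⟩
    rcases Fin.eq_zero_or_eq_succ i with rfl | ⟨i', rfl⟩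
    · rcases Fin.eq_zero_or_eq_succ j with rfl | ⟨j', rfl⟩
      · exact absurd hij (lt_irrefl _)
      · exact ⟨Sum.inl j', rfl⟩
    · rcases Fin.eq_zero_or_eq_succ j with rfl | ⟨j', rfl⟩
      · exact absurd hij (by simp [Fin.le_zero_iff, Fin.lt_iff_val_lt_val])
      · exact ⟨Sum.inr ⟨(i', j'), Fin.succ_lt_succ_iff.mp hij⟩, rfl⟩

lemma card_pairIdx (n : ℕ) : Fintype.card (PairIdx n) = n.choose 2 := by
  induction n with
  | zero => simp [Fintype.card_eq_zero]
  | succ k ih =>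
      have hcongr := Fintype.card_congr (pairIdxSuccEquiv k)
      rw [Fintype.card_sum, Fintype.card_fin, ih] at hcongr
      rw [← hcongr, Nat.choose_succ_succ, Nat.choose_one_right]

section Reorder

variable {G' : Type*} [Group G']

lemma comm_mul_left (hc : ∀ x y : G', ⁅x, y⁆ ∈ Subgroup.center G')
    (a b z : G') : ⁅a * b, z⁆ = ⁅a, z⁆ * ⁅b, z⁆ := by
  have h := Subgroup.mem_center_iff.mp (hc b z)
  have e1 : ⁅a * b, z⁆ = a * ⁅b, z⁆ * (z * a⁻¹ * z⁻¹) := by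
    simp only [commutatorElement_def]; group
  rw [e1, h a]
  have e2 : ⁅b, z⁆ * a * (z * a⁻¹ * z⁻¹) = ⁅b, z⁆ * ⁅a, z⁆ := by
    simp only [commutatorElement_def]; group
  rw [e2, ← h ⁅a, z⁆]

lemma comm_pow_left (hc : ∀ x y : G', ⁅x, y⁆ ∈ Subgroup.center G')
    (a z : G') (e : ℕ) : ⁅a ^ e, z⁆ = ⁅a, z⁆ ^ e := by
  induction e with
  | zero => simp
  | succ k ih => rw [pow_succ, comm_mul_left hc, ih, pow_succ]

lemma comm_pow_right (hc : ∀ x y : G', ⁅x, y⁆ ∈ Subgroup.center G')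
    (a z : G') (e : ℕ) : ⁅a, z ^ e⁆ = ⁅a, z⁆ ^ e := by
  have h1 : ⁅a, z ^ e⁆ = ⁅z ^ e, a⁆⁻¹ := (commutatorElement_inv _ _).symm
  rw [h1, comm_pow_left hc, ← inv_pow, commutatorElement_inv]

lemma comm_list_prod_left (hc : ∀ x y : G', ⁅x, y⁆ ∈ Subgroup.center G')
    (z : G') : ∀ (l : List G'), ⁅l.prod, z⁆ = (l.map fun w => ⁅w, z⁆).prod := by
  intro l
  induction l with
  | nil => simp
  | cons a l ih => rw [List.prod_cons, comm_mul_left hc, ih, List.map_cons, List.prod_cons]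

lemma mul_eq_comm_mul_mul (a b : G') : a * b = ⁅a, b⁆ * (b * a) := by
  simp only [commutatorElement_def]; group

def Plist {k : ℕ} (u : Fin k → G') (A : Fin k → ℕ) : G' :=
  ((List.finRange k).map fun j => u j ^ A j).prod

def corrC (hc : ∀ x y : G', ⁅x, y⁆ ∈ Subgroup.center G') {k : ℕ}
    (u : Fin k → G') (A A' : Fin k → ℕ) : Subgroup.center G' :=
  ∏ q : PairIdx k,
    (⟨⁅u q.val.2, u q.val.1⁆, hc _ _⟩ : Subgroup.center G') ^ (A q.val.2 * A' q.val.1)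

lemma Plist_succ {k : ℕ} (u : Fin (k + 1) → G') (A : Fin (k + 1) → ℕ) :
    Plist u A = u 0 ^ A 0 * Plist (fun j => u j.succ) (fun j => A j.succ) := by
  simp only [Plist, List.finRange_succ, List.map_cons, List.prod_cons, List.map_map]
  rfl

lemma corrC_succ (hc : ∀ x y : G', ⁅x, y⁆ ∈ Subgroup.center G') {k : ℕ}
    (u : Fin (k + 1) → G') (A A' : Fin (k + 1) → ℕ) :
    corrC hc u A A' =
      corrC hc (fun j => u j.succ) (fun j => A j.succ) (fun j => A' j.succ) *
      ∏ j : Fin k,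
        (⟨⁅u j.succ, u 0⁆, hc _ _⟩ : Subgroup.center G') ^ (A j.succ * A' 0) := by
  rw [corrC, ← Equiv.prod_comp (pairIdxSuccEquiv k), Fintype.prod_sum_type]
  rw [mul_comm]
  rfl

lemma reorder (hc : ∀ x y : G', ⁅x, y⁆ ∈ Subgroup.center G') :
    ∀ (k : ℕ) (u : Fin k → G') (A A' : Fin k → ℕ),
      Plist u A * Plist u A' = Plist u (fun j => A j + A' j) * (corrC hc u A A' : G') := by
  intro k
  induction k with
  | zero =>
      intro u A A'
      simp [Plist, corrC, Finset.univ_eq_empty]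
  | succ k ih =>
      intro u A A'
      set us : Fin k → G' := fun j => u j.succ with hus
      set As : Fin k → ℕ := fun j => A j.succ with hAs
      set A's : Fin k → ℕ := fun j => A' j.succ with hA's
      set z := u 0 with hz
      set X := Plist us As with hX
      set X' := Plist us A's with hX'
      have hDelta : ⁅X, z ^ A' 0⁆ =
          ((∏ j : Fin k, (⟨⁅u j.succ, u 0⁆, hc _ _⟩ : Subgroup.center G') ^ (A j.succ * A' 0) :
            Subgroup.center G') : G') := by
        rw [hX, Plist, comm_list_prod_left hc, List.map_map, Fin.prod_univ_def,
          SubmonoidClass.coe_list_prod, List.map_map]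
        refine congrArg List.prod (congrArg (fun f => List.map f (List.finRange k)) ?_)
        funext j
        simp only [Function.comp, SubmonoidClass.coe_pow]
        rw [comm_pow_left hc, comm_pow_right hc, ← pow_mul, mul_comm (A' 0)]
      set Delta := ⁅X, z ^ A' 0⁆ with hDdef
      have hDc : ∀ w : G', w * Delta = Delta * w := fun w =>
        Subgroup.mem_center_iff.mp (hc _ _) w
      have key : X * z ^ A' 0 = Delta * (z ^ A' 0 * X) := mul_eq_comm_mul_mul _ _
      calc Plist u A * Plist u A'
          = z ^ A 0 * X * (z ^ A' 0 * X') := by rw [Plist_succ, Plist_succ]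
        _ = z ^ A 0 * (X * z ^ A' 0) * X' := by group
        _ = z ^ A 0 * (Delta * (z ^ A' 0 * X)) * X' := by rw [key]
        _ = Delta * (z ^ A 0 * z ^ A' 0 * (X * X')) := by
              rw [show z ^ A 0 * (Delta * (z ^ A' 0 * X)) * X'
                    = z ^ A 0 * Delta * (z ^ A' 0 * X) * X' from by group, hDc]
              group
        _ = Delta * (z ^ (A 0 + A' 0) * (Plist us (fun j => As j + A's j) *
              (corrC hc us As A's : G'))) := by rw [pow_add, ih us As A's]
        _ = z ^ (A 0 + A' 0) * Plist us (fun j => As j + A's j) *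
              ((corrC hc us As A's : G') * Delta) := by
              rw [← hDc]; group
        _ = Plist u (fun j => A j + A' j) * (corrC hc u A A' : G') := by
              rw [Plist_succ u (fun j => A j + A' j), corrC_succ hc u A A']
              push_cast
              rw [hDelta]

end Reorder

-- PART C1: basic facts about the extension Unp
section UnpSide

variable {p n : ℕ} [Fact p.Prime]
variable {Unp : Type} [Group Unp]
variable (EU : CentralExtension (Multiplicative (Fin (Nat.choose (n + 1) 2) → ZMod p)) Unp
  (Multiplicative (Fin n → ZMod p)))

lemma pow_p_eq_one_V (v : Multiplicative (Fin (Nat.choose (n + 1) 2) → ZMod p)) :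
    v ^ p = 1 := by
  rw [← ofAdd_toAdd v, ← ofAdd_nsmul]
  have : p • v.toAdd = 0 := by
    funext t
    simp only [Pi.smul_apply, Pi.zero_apply, nsmul_eq_mul, ZMod.natCast_self, zero_mul]
  rw [this, ofAdd_zero]

lemma pow_p_eq_one_W (w : Multiplicative (Fin n → ZMod p)) : w ^ p = 1 := by
  rw [← ofAdd_toAdd w, ← ofAdd_nsmul]
  have : p • w.toAdd = 0 := by
    funext t
    simp only [Pi.smul_apply, Pi.zero_apply, nsmul_eq_mul, ZMod.natCast_self, zero_mul]
  rw [this, ofAdd_zero]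

include EU

lemma comm_mem_range (x y : Unp) : ⁅x, y⁆ ∈ EU.ι.range := by
  rw [EU.range_eq_ker, MonoidHom.mem_ker, map_commutatorElement]
  exact commutatorElement_eq_one_iff_commute.mpr (Commute.all _ _)

lemma comm_mem_center (x y : Unp) : ⁅x, y⁆ ∈ Subgroup.center Unp :=
  EU.range_le_center (comm_mem_range EU x y)

lemma pow_p_mem_range (x : Unp) : x ^ p ∈ EU.ι.range := by
  rw [EU.range_eq_ker, MonoidHom.mem_ker, map_pow]
  exact pow_p_eq_one_W _

lemma iota_central (v : Multiplicative (Fin (Nat.choose (n + 1) 2) → ZMod p)) (g : Unp) :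
    g * EU.ι v = EU.ι v * g :=
  Subgroup.mem_center_iff.mp (EU.range_le_center ⟨v, rfl⟩) g

lemma iota_pow_p (v : Multiplicative (Fin (Nat.choose (n + 1) 2) → ZMod p)) :
    EU.ι v ^ p = 1 := by
  rw [← map_pow, pow_p_eq_one_V, map_one]

lemma pow_p_sq_eq_one (x : Unp) : x ^ p ^ 2 = 1 := by
  obtain ⟨v, hv⟩ := pow_p_mem_range EU x
  rw [pow_two, pow_mul, ← hv, iota_pow_p]

end UnpSide


-- PART A: arithmetic in `ZMod p` and `ZMod (p^2)`
section ZModArith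

variable (p : ℕ) [Fact p.Prime]

instance : NeZero (p ^ 2) := ⟨pow_ne_zero _ (NeZero.ne p)⟩

/-- reduction mod `p`. -/
def redp (b : ZMod (p ^ 2)) : ZMod p :=
  ZMod.castHom (dvd_pow_self p two_ne_zero) (ZMod p) b

/-- division by `p` (meaningful on multiples of `p`). -/
def pdivp (b : ZMod (p ^ 2)) : ZMod p := ((b.val / p : ℕ) : ZMod p)

lemma redp_val (b : ZMod (p ^ 2)) : ((b.val : ℕ) : ZMod p) = redp p b := by
  rw [redp, ZMod.castHom_apply, ZMod.natCast_val]

lemma redp_add (a b : ZMod (p ^ 2)) : redp p (a + b) = redp p a + redp p b :=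
  map_add _ _ _

lemma redp_neg (a : ZMod (p ^ 2)) : redp p (-a) = - redp p a :=
  map_neg _ _

lemma redp_zero_iff (b : ZMod (p ^ 2)) : redp p b = 0 ↔ p ∣ b.val := by
  rw [← redp_val, ZMod.natCast_eq_zero_iff]

lemma natCast_val_self (b : ZMod (p ^ 2)) : ((b.val : ℕ) : ZMod (p ^ 2)) = b := by
  rw [ZMod.natCast_val, ZMod.cast_id]

lemma pdivp_key (b b' : ZMod (p ^ 2)) (v : ZMod p) (hb : p ∣ b.val) (hb' : p ∣ b'.val) :
    pdivp p (b + b' + (v.val : ZMod (p ^ 2)) * (p : ZMod (p ^ 2))) =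
      pdivp p b + pdivp p b' + v := by
  have hp : 0 < p := (Fact.out : p.Prime).pos
  obtain ⟨x', hx⟩ := hb
  obtain ⟨y', hy⟩ := hb'
  have hsum : b + b' + (v.val : ZMod (p ^ 2)) * (p : ZMod (p ^ 2)) =
      ((p * (x' + y' + v.val) : ℕ) : ZMod (p ^ 2)) := by
    rw [← natCast_val_self p b, ← natCast_val_self p b', hx, hy]
    push_cast
    ring
  rw [hsum, pdivp, ZMod.val_natCast, pow_two, Nat.mul_mod_mul_left,
    Nat.mul_div_cancel_left _ hp, ZMod.natCast_mod]
  push_cast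
  rw [pdivp, pdivp, hx, hy, Nat.mul_div_cancel_left _ hp, Nat.mul_div_cancel_left _ hp,
    ZMod.natCast_val, ZMod.cast_id]

lemma pdivp_zero : pdivp p 0 = 0 := by
  simp [pdivp, ZMod.val_zero]

lemma pdivp_mul_p (v : ZMod p) :
    pdivp p ((v.val : ZMod (p ^ 2)) * (p : ZMod (p ^ 2))) = v := by
  have := pdivp_key p 0 0 v (by simp) (by simp)
  simpa [pdivp_zero] using this

lemma redp_mul_p (v : ZMod p) :
    redp p ((v.val : ZMod (p ^ 2)) * (p : ZMod (p ^ 2))) = 0 := by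
  rw [redp, map_mul, map_natCast, map_natCast, ZMod.natCast_self, mul_zero]

lemma eq_of_pdivp_eq (b b' : ZMod (p ^ 2)) (hb : p ∣ b.val) (hb' : p ∣ b'.val)
    (h : pdivp p b = pdivp p b') : b = b' := by
  have hp : 0 < p := (Fact.out : p.Prime).pos
  have h1 : b.val / p < p := by
    rw [Nat.div_lt_iff_lt_mul hp, ← pow_two]
    exact ZMod.val_lt b
  have h2 : b'.val / p < p := by
    rw [Nat.div_lt_iff_lt_mul hp, ← pow_two]
    exact ZMod.val_lt b'
  have := congrArg ZMod.val h
  rw [pdivp, pdivp, ZMod.val_cast_of_lt h1, ZMod.val_cast_of_lt h2] at this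
  have hval : b.val = b'.val := by
    rw [← Nat.div_mul_cancel hb, ← Nat.div_mul_cancel hb', this]
  rw [← natCast_val_self p b, ← natCast_val_self p b', hval]

lemma redp_eq_zero_of_p_smul (b : ZMod (p ^ 2)) (h : p • b = 0) : redp p b = 0 := by
  have hp : 0 < p := (Fact.out : p.Prime).pos
  rw [nsmul_eq_mul, ← natCast_val_self p b] at h
  rw [show ((p : ZMod (p ^ 2)) * ((b.val : ℕ) : ZMod (p ^ 2))) = ((p * b.val : ℕ) : ZMod (p ^ 2))
    from by push_cast; ring] at h
  rw [ZMod.natCast_eq_zero_iff] at h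
  have h2 : p * p ∣ p * b.val := by rw [← pow_two]; exact h
  exact (redp_zero_iff p b).mpr ((mul_dvd_mul_iff_left hp.ne').mp h2)

end ZModArith


-- PART C2: the model map into `Unp`
/-- carrier of the model group. -/
abbrev Mcar (p n : ℕ) : Type := (Fin n → ZMod (p ^ 2)) × (PairIdx n → ZMod p)

/-- the model multiplication (matching the exponent-`p²` construction on `H`). -/
def mprodM (p n : ℕ) [Fact p.Prime] (x y : Mcar p n) : Mcar p n :=
  (x.1 + y.1, x.2 + y.2 + fun q =>
    redp p (x.1 q.val.1) * redp p (y.1 q.val.2) - redp p (x.1 q.val.2) * redp p (y.1 q.val.1))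

section Model

variable {p n : ℕ} [Fact p.Prime]
variable {Unp : Type} [Group Unp]
variable (EU : CentralExtension (Multiplicative (Fin (Nat.choose (n + 1) 2) → ZMod p)) Unp
  (Multiplicative (Fin n → ZMod p)))

/-- chosen lifts of the standard basis of `W`. -/
noncomputable def uLift (k : Fin n) : Unp :=
  Function.surjInv EU.π_surjective (Multiplicative.ofAdd (Pi.single k 1))

lemma pi_uLift (k : Fin n) : EU.π (uLift EU k) = Multiplicative.ofAdd (Pi.single k 1) :=
  Function.surjInv_eq EU.π_surjective _

/-- chosen logarithms of the basic commutators. -/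
noncomputable def sigmaq (q : PairIdx n) : Fin (Nat.choose (n + 1) 2) → ZMod p :=
  Multiplicative.toAdd
    (MonoidHom.mem_range.mp (comm_mem_range EU (uLift EU q.val.1) (uLift EU q.val.2))).choose

lemma iota_sigmaq (q : PairIdx n) :
    EU.ι (Multiplicative.ofAdd (sigmaq EU q)) = ⁅uLift EU q.val.1, uLift EU q.val.2⁆ := by
  rw [sigmaq, ofAdd_toAdd]
  exact (MonoidHom.mem_range.mp
    (comm_mem_range EU (uLift EU q.val.1) (uLift EU q.val.2))).choose_spec

lemma pi_Plist (A : Fin n → ℕ) :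
    EU.π (Plist (uLift EU) A) = Multiplicative.ofAdd (fun t => (A t : ZMod p)) := by
  rw [Plist, MonoidHom.map_list_prod, List.map_map, ← Fin.prod_univ_def]
  have hj : ∀ j : Fin n, (EU.π ∘ fun j => uLift EU j ^ A j) j =
      Multiplicative.ofAdd (Pi.single j ((A j : ZMod p))) := by
    intro j
    simp only [Function.comp]
    rw [map_pow, pi_uLift, ← ofAdd_nsmul]
    congr 1
    rw [← Pi.single_smul, nsmul_eq_mul, mul_one]
  rw [Finset.prod_congr rfl (fun j _ => hj j), ← ofAdd_sum, Finset.univ_sum_single]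

lemma Plist_congr_exp {G' : Type*} [Group G'] {k : ℕ} (u : Fin k → G') {A B : Fin k → ℕ}
    (h : ∀ j, u j ^ A j = u j ^ B j) : Plist u A = Plist u B := by
  unfold Plist
  congr 1
  exact List.map_congr_left (fun j _ => h j)

/-- `EU.ι` with codomain the centre. -/
noncomputable def Tcen : Multiplicative (Fin (Nat.choose (n + 1) 2) → ZMod p) →*
    Subgroup.center Unp :=
  EU.ι.codRestrict _ (fun v => EU.range_le_center ⟨v, rfl⟩)

lemma coe_Tcen (v : Multiplicative (Fin (Nat.choose (n + 1) 2) → ZMod p)) :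
    ((Tcen EU v : Subgroup.center Unp) : Unp) = EU.ι v := rfl

lemma corr_coe (A A' : Fin n → ℕ) :
    ((corrC (comm_mem_center EU) (uLift EU) A A' : Subgroup.center Unp) : Unp) =
      EU.ι (Multiplicative.ofAdd
        (∑ q : PairIdx n, (-((A q.val.2 * A' q.val.1 : ℕ) : ZMod p)) • sigmaq EU q)) := by
  have hfac : ∀ q : PairIdx n,
      (⟨⁅uLift EU q.val.2, uLift EU q.val.1⁆, comm_mem_center EU _ _⟩ :
        Subgroup.center Unp) ^ (A q.val.2 * A' q.val.1)
      = Tcen EU ((Multiplicative.ofAdd (sigmaq EU q))⁻¹ ^ (A q.val.2 * A' q.val.1)) := by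
    intro q
    apply Subtype.ext
    push_cast
    rw [coe_Tcen, map_pow, map_inv, iota_sigmaq, commutatorElement_inv]
  rw [corrC, Finset.prod_congr rfl (fun q _ => hfac q), ← map_prod, coe_Tcen]
  congr 1
  have hq : ∀ q : PairIdx n, (Multiplicative.ofAdd (sigmaq EU q))⁻¹ ^ (A q.val.2 * A' q.val.1)
      = Multiplicative.ofAdd ((-((A q.val.2 * A' q.val.1 : ℕ) : ZMod p)) • sigmaq EU q) := by
    intro q
    rw [← ofAdd_neg, ← ofAdd_nsmul]
    congr 1
    rw [← Nat.cast_smul_eq_nsmul (ZMod p), smul_neg, neg_smul]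
  rw [Finset.prod_congr rfl (fun q _ => hq q), ← ofAdd_sum]

/-- The model map `Mcar → Unp`. -/
noncomputable def phiM (x : Mcar p n) : Unp :=
  Plist (uLift EU) (fun k => (x.1 k).val) *
  EU.ι (Multiplicative.ofAdd (∑ q : PairIdx n,
    ((2 : ZMod p)⁻¹ * (x.2 q - redp p (x.1 q.val.1) * redp p (x.1 q.val.2))) • sigmaq EU q))

lemma phiM_mul (hodd : Odd p) (x y : Mcar p n) :
    phiM EU (mprodM p n x y) = phiM EU x * phiM EU y := by
  have h2 : (2 : ZMod p) ≠ 0 := by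
    have hp2 : p ≠ 2 := by
      rintro rfl
      exact (Nat.not_odd_iff_even.mpr (by norm_num)) hodd
    intro hcon
    have hd : p ∣ 2 := (ZMod.natCast_eq_zero_iff 2 p).mp (by exact_mod_cast hcon)
    exact hp2 ((Nat.prime_dvd_prime_iff_eq Fact.out Nat.prime_two).mp hd)
  have hadd : ∀ c c' : PairIdx n → ZMod p,
      ((∑ q : PairIdx n, c q • sigmaq EU q) + ∑ q : PairIdx n, c' q • sigmaq EU q)
        = ∑ q : PairIdx n, (c q + c' q) • sigmaq EU q := fun c c' => by
    rw [← Finset.sum_add_distrib]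
    exact Finset.sum_congr rfl (fun q _ => (add_smul _ _ _).symm)
  have hPl : Plist (uLift EU) (fun j => (x.1 j + y.1 j).val)
      = Plist (uLift EU) (fun j => (x.1 j).val + (y.1 j).val) := by
    refine Plist_congr_exp _ (fun j => ?_)
    rw [ZMod.val_add]
    exact (pow_eq_pow_mod _ (pow_p_sq_eq_one EU _)).symm
  have central_collect : ∀ (P Q : Unp) (v w : Multiplicative (Fin (Nat.choose (n + 1) 2) → ZMod p)),
      (P * EU.ι v) * (Q * EU.ι w) = (P * Q) * EU.ι (v * w) := by
    intro P Q v w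
    rw [map_mul]
    calc (P * EU.ι v) * (Q * EU.ι w) = P * (EU.ι v * Q) * EU.ι w := by group
      _ = P * (Q * EU.ι v) * EU.ι w := by rw [← iota_central]
      _ = (P * Q) * (EU.ι v * EU.ι w) := by group
  simp only [phiM, mprodM, Pi.add_apply]
  rw [hPl, central_collect,
    reorder (comm_mem_center EU) n (uLift EU) (fun j => (x.1 j).val) (fun j => (y.1 j).val),
    corr_coe, mul_assoc, ← map_mul]
  refine congrArg₂ (· * ·) rfl (congrArg EU.ι ?_)
  rw [← ofAdd_add, ← ofAdd_add]
  refine congrArg Multiplicative.ofAdd ?_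
  rw [hadd, hadd]
  refine Finset.sum_congr rfl (fun q _ => ?_)
  refine congrArg (· • sigmaq EU q) ?_
  have hc : (((x.1 q.val.2).val * (y.1 q.val.1).val : ℕ) : ZMod p)
      = redp p (x.1 q.val.2) * redp p (y.1 q.val.1) := by
    push_cast
    rw [redp_val, redp_val]
  rw [redp_add, redp_add, hc]
  field_simp
  ring

end Model


-- PART C3: surjectivity and bijectivity of `phiM`
section Model2

variable {p n : ℕ} [Fact p.Prime]
variable {Unp : Type} [Group Unp]
variable (EU : CentralExtension (Multiplicative (Fin (Nat.choose (n + 1) 2) → ZMod p)) Unp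
  (Multiplicative (Fin n → ZMod p)))

lemma Plist_exp_zero {G' : Type*} [Group G'] {k : ℕ} (u : Fin k → G') (A : Fin k → ℕ)
    (h : ∀ j, A j = 0) : Plist u A = 1 := by
  unfold Plist
  apply List.prod_eq_one
  intro x hx
  rcases List.mem_map.mp hx with ⟨j, _, rfl⟩
  rw [h, pow_zero]

lemma phiM_zero : phiM EU ((0, 0) : Mcar p n) = 1 := by
  rw [phiM, Plist_exp_zero (uLift EU) (fun k => ((((0 : Fin n → ZMod (p ^ 2)), (0 : PairIdx n → ZMod p)) : Mcar p n).1 k).val)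
    (fun j => ZMod.val_zero), one_mul]
  have h2 : ∀ q : PairIdx n,
      ((2 : ZMod p)⁻¹ * (((0, 0) : Mcar p n).2 q
        - redp p (((0, 0) : Mcar p n).1 q.val.1) * redp p (((0, 0) : Mcar p n).1 q.val.2)))
      = 0 := by
    intro q
    simp [redp]
  rw [Finset.sum_congr rfl (fun q _ => by rw [h2 q, zero_smul]), Finset.sum_const_zero,
    ofAdd_zero, map_one]

lemma pi_iota (v : Multiplicative (Fin (Nat.choose (n + 1) 2) → ZMod p)) :
    EU.π (EU.ι v) = 1 := by
  have h : EU.ι v ∈ EU.π.ker := by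
    rw [← EU.range_eq_ker]
    exact ⟨v, rfl⟩
  exact MonoidHom.mem_ker.mp h

lemma mprodM_neg (a : Mcar p n) : mprodM p n (-a.1, -a.2) a = (0, 0) := by
  unfold mprodM
  refine Prod.ext (by simp) ?_
  funext q
  simp only [Pi.add_apply, Pi.neg_apply, redp_neg, Pi.zero_apply]
  ring

lemma comm_reduce (hc : ∀ x y : Unp, ⁅x, y⁆ ∈ Subgroup.center Unp)
    (s t z z' : Unp) (hz : z ∈ Subgroup.center Unp) (hz' : z' ∈ Subgroup.center Unp) :
    ⁅s * z, t * z'⁆ = ⁅s, t⁆ := by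
  have hzc : ∀ w : Unp, ⁅z, w⁆ = 1 := fun w =>
    commutatorElement_eq_one_iff_commute.mpr ((Subgroup.mem_center_iff.mp hz w).symm)
  have hz'c : ∀ w : Unp, ⁅z', w⁆ = 1 := fun w =>
    commutatorElement_eq_one_iff_commute.mpr ((Subgroup.mem_center_iff.mp hz' w).symm)
  have h1 : ⁅s * z, t * z'⁆ = ⁅s, t * z'⁆ := by
    rw [comm_mul_left hc, hzc, mul_one]
  rw [h1, ← commutatorElement_inv, comm_mul_left hc, hz'c, mul_one, commutatorElement_inv]

lemma hdecomp (g : Unp) :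
    ∃ (a : Mcar p n) (v : Multiplicative (Fin (Nat.choose (n + 1) 2) → ZMod p)),
      g = phiM EU a * EU.ι v := by
  set w := Multiplicative.toAdd (EU.π g) with hw
  set a0 : Mcar p n := (fun k => (((w k).val : ℕ) : ZMod (p ^ 2)), 0) with ha0
  have hπa0 : EU.π (phiM EU a0) = EU.π g := by
    rw [phiM, map_mul, pi_iota, mul_one, pi_Plist]
    have hval : ∀ t, ((a0.1 t).val : ZMod p) = w t := by
      intro t
      have hp1 : 1 < p := (Fact.out : p.Prime).one_lt
      have hlt : (w t).val < p ^ 2 := lt_of_lt_of_le (ZMod.val_lt _)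
        (by nlinarith)
      show ((((((w t).val : ℕ) : ZMod (p ^ 2))).val : ℕ) : ZMod p) = w t
      rw [ZMod.val_cast_of_lt hlt, ZMod.natCast_val, ZMod.cast_id]
    rw [show (fun t => ((a0.1 t).val : ZMod p)) = w from funext hval, hw, ofAdd_toAdd]
  have hker : (phiM EU a0)⁻¹ * g ∈ EU.ι.range := by
    rw [EU.range_eq_ker, MonoidHom.mem_ker, map_mul, map_inv, hπa0, inv_mul_cancel]
  obtain ⟨v, hv⟩ := MonoidHom.mem_range.mp hker
  exact ⟨a0, v, by rw [hv, ← mul_assoc, mul_inv_cancel, one_mul]⟩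

lemma phiM_surjective (hodd : Odd p)
    (hUF : EU.ι.range = pPowerCommutatorSubgroup p Unp) :
    Function.Surjective (phiM EU) := by
  classical
  set S : Subgroup Unp :=
    { carrier := Set.range (phiM EU)
      one_mem' := ⟨(0, 0), phiM_zero EU⟩
      mul_mem' := by
        rintro a b ⟨x, rfl⟩ ⟨y, rfl⟩
        exact ⟨mprodM p n x y, phiM_mul EU hodd x y⟩
      inv_mem' := by
        rintro a ⟨x, rfl⟩
        refine ⟨(-x.1, -x.2), ?_⟩
        have h1 : phiM EU (-x.1, -x.2) * phiM EU x = 1 := by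
          rw [← phiM_mul EU hodd, mprodM_neg, phiM_zero]
        exact (inv_eq_of_mul_eq_one_left h1).symm } with hSdef
  have hmemS : ∀ a : Mcar p n, phiM EU a ∈ S := fun a => ⟨a, rfl⟩
  have hc := comm_mem_center EU
  have hR : EU.ι.range ≤ S := by
    rw [hUF, pPowerCommutatorSubgroup]
    apply sup_le
    · rw [commutator_def]
      apply Subgroup.commutator_le.mpr
      intro g1 _ g2 _
      obtain ⟨a1, v1, rfl⟩ := hdecomp EU g1
      obtain ⟨a2, v2, rfl⟩ := hdecomp EU g2
      rw [comm_reduce hc _ _ _ _ (EU.range_le_center ⟨v1, rfl⟩)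
        (EU.range_le_center ⟨v2, rfl⟩), commutatorElement_def]
      exact S.mul_mem (S.mul_mem (S.mul_mem (hmemS a1) (hmemS a2)) (S.inv_mem (hmemS a1)))
        (S.inv_mem (hmemS a2))
    · apply (Subgroup.closure_le _).mpr
      rintro _ ⟨g, rfl⟩
      obtain ⟨a, v, rfl⟩ := hdecomp EU g
      have hcom : Commute (phiM EU a) (EU.ι v) := iota_central EU v (phiM EU a)
      rw [hcom.mul_pow, iota_pow_p, mul_one]
      exact S.pow_mem (hmemS a) p
  intro g
  obtain ⟨a, v, rfl⟩ := hdecomp EU g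
  exact S.mul_mem (hmemS a) (hR ⟨v, rfl⟩)

include EU in
lemma card_Mcar_eq [Finite Unp] : Nat.card (Mcar p n) = Nat.card Unp := by
  classical
  have h1 : Nat.card Unp
      = Nat.card (Multiplicative (Fin n → ZMod p)) * Nat.card EU.π.ker := by
    rw [Subgroup.card_eq_card_quotient_mul_card_subgroup EU.π.ker]
    congr 1
    exact Nat.card_congr (QuotientGroup.quotientKerEquivOfSurjective EU.π
      EU.π_surjective).toEquiv
  have h2 : Nat.card EU.π.ker
      = Nat.card (Multiplicative (Fin (Nat.choose (n + 1) 2) → ZMod p)) := by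
    rw [← EU.range_eq_ker]
    exact (Nat.card_congr (MonoidHom.ofInjective EU.ι_injective).toEquiv).symm
  have hW : Nat.card (Multiplicative (Fin n → ZMod p)) = p ^ n := by
    rw [Nat.card_congr Multiplicative.toAdd, Nat.card_fun, Nat.card_zmod, Nat.card_eq_fintype_card, Fintype.card_fin]
  have hV : Nat.card (Multiplicative (Fin (Nat.choose (n + 1) 2) → ZMod p))
      = p ^ (Nat.choose (n + 1) 2) := by
    rw [Nat.card_congr Multiplicative.toAdd, Nat.card_fun, Nat.card_zmod, Nat.card_eq_fintype_card, Fintype.card_fin]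
  have hPq : Nat.card (PairIdx n) = n.choose 2 := by
    rw [Nat.card_eq_fintype_card, card_pairIdx]
  have hM : Nat.card (Mcar p n) = (p ^ 2) ^ n * p ^ (Nat.choose n 2) := by
    rw [Nat.card_prod, Nat.card_fun, Nat.card_fun, Nat.card_zmod, Nat.card_zmod,
      Nat.card_eq_fintype_card (α := Fin n), Fintype.card_fin, hPq]
  rw [h1, h2, hW, hV, hM, Nat.choose_succ_succ, Nat.choose_one_right, pow_add, ← pow_mul]
  ring

lemma phiM_bijective [Finite Unp] (hodd : Odd p)
    (hUF : EU.ι.range = pPowerCommutatorSubgroup p Unp) :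
    Function.Bijective (phiM EU) :=
  (Nat.bijective_iff_surjective_and_card _).mpr
    ⟨phiM_surjective EU hodd hUF, card_Mcar_eq EU⟩

end Model2


-- PART B: the group `G` given by the exponent-`p²` construction
section Gside

variable {p n : ℕ} [Fact p.Prime] {G : Type} [Group G]
variable (e : G ≃ GhnCarrier p n)
variable (he : ∀ x y : G, e (x * y) =
  e x + e y + ghnInj p n (hnBracket p n (ghnProj p n (e x)) (ghnProj p n (e y))))

lemma ghnInj_zero : ghnInj p n (0 : FreeNilpotent2 p n) = 0 := by
  unfold ghnInj
  refine Prod.ext ?_ ?_ <;> funext t <;>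
    simp

lemma hnBracket_smul_self (k : ℕ) (u : FreeNilpotent2 p n) :
    hnBracket p n (k • u) u = 0 := by
  unfold hnBracket
  refine Prod.ext rfl ?_
  funext q
  show (k • u.1 q.val.1) * u.1 q.val.2 - (k • u.1 q.val.2) * u.1 q.val.1 = 0
  rw [smul_mul_assoc, smul_mul_assoc, mul_comm]
  exact sub_self _

lemma hnBracket_self (u : FreeNilpotent2 p n) : hnBracket p n u u = 0 := by
  have := hnBracket_smul_self (p := p) (n := n) 1 u
  rwa [one_smul] at this

lemma ghnProj_smul (k : ℕ) (x : GhnCarrier p n) :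
    ghnProj p n (k • x) = k • ghnProj p n x := by
  unfold ghnProj
  refine Prod.ext ?_ ?_ <;> funext t <;> exact map_nsmul _ _ _

include he

lemma e_one : e 1 = 0 := by
  have h := he 1 1
  rw [mul_one, hnBracket_self, ghnInj_zero, add_zero] at h
  have h2 : e 1 + 0 = e 1 + e 1 := by rw [add_zero]; exact h
  exact (add_left_cancel h2).symm

lemma e_pow (g : G) : ∀ k : ℕ, e (g ^ k) = k • e g := by
  intro k
  induction k with
  | zero => rw [pow_zero, e_one e he, zero_nsmul]
  | succ k ih =>
      rw [pow_succ, he, ih, ghnProj_smul, hnBracket_smul_self, ghnInj_zero, add_zero,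
        succ_nsmul]

lemma e_mul_fst (x y : G) : (e (x * y)).1 = (e x).1 + (e y).1 := by
  rw [he]
  funext t
  show (e x).1 t + (e y).1 t
      + (((hnBracket p n (ghnProj p n (e x)) (ghnProj p n (e y))).1 t).val : ZMod (p ^ 2))
        * (p : ZMod (p ^ 2)) = (e x).1 t + (e y).1 t
  show (e x).1 t + (e y).1 t + (((0 : ZMod p).val : ℕ) : ZMod (p ^ 2)) * (p : ZMod (p ^ 2))
      = (e x).1 t + (e y).1 t
  rw [ZMod.val_zero, Nat.cast_zero, zero_mul, add_zero]

lemma e_mul_snd (x y : G) : (e (x * y)).2 = (e x).2 + (e y).2 + fun q =>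
    (((hnBracket p n (ghnProj p n (e x)) (ghnProj p n (e y))).2 q).val : ZMod (p ^ 2))
      * (p : ZMod (p ^ 2)) := by
  rw [he]
  rfl

lemma proj_e_mul_snd (x y : G) : (ghnProj p n (e (x * y))).2
    = (ghnProj p n (e x)).2 + (ghnProj p n (e y)).2 := by
  funext q
  show redp p ((e (x * y)).2 q) = redp p ((e x).2 q) + redp p ((e y).2 q)
  rw [e_mul_snd e he]
  show redp p ((e x).2 q + (e y).2 q +
    (((hnBracket p n (ghnProj p n (e x)) (ghnProj p n (e y))).2 q).val : ZMod (p ^ 2))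
      * (p : ZMod (p ^ 2))) = _
  rw [redp_add, redp_add, redp_mul_p, add_zero]

end Gside

theorem Unp_inside_G_of_free_nilpotent_Lie_algebra
    (p n : ℕ) [Fact p.Prime] (hodd : Odd p) (hn : 0 < n)
    -- `G(𝔥(n))`: the group given by the exponent-`p²` construction on `𝔥(n)`
    (G : Type) [Group G] (e : G ≃ GhnCarrier p n)
    (he : ∀ x y : G, e (x * y) =
      e x + e y + ghnInj p n (hnBracket p n (ghnProj p n (e x)) (ghnProj p n (e y))))
    -- `U(n,p)`: a central Frattini extension `1 → (ℤ/p)^{C(n+1,2)} → U(n,p) → (ℤ/p)^n → 1`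
    (Unp : Type) [Group Unp] [Finite Unp]
    (EU : CentralExtension (Multiplicative (Fin (Nat.choose (n + 1) 2) → ZMod p)) Unp
      (Multiplicative (Fin n → ZMod p)))
    (hUFrattini : EU.ι.range = pPowerCommutatorSubgroup p Unp) :
    -- conclusion: `π⁻¹(S) ≅ U(n,p)` for `S ⊂ W = 𝔥(n)` the span of the `e_k`;
    -- in particular `U(n,p)` is (isomorphic to) a subgroup of `G(𝔥(n))` containing
    -- `Ω₁(G(𝔥(n)))`.
    ∃ H : Subgroup G,
      (H : Set G) = {x : G | (ghnProj p n (e x)).2 = 0} ∧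
      Nonempty (H ≃* Unp) ∧
      (∀ g : G, g ^ p = 1 → g ∈ H) := by
  classical
  have hzero_mem : (ghnProj p n (e 1)).2 = 0 := by
    rw [e_one e he]
    funext q
    exact map_zero _
  set H : Subgroup G :=
    { carrier := {x : G | (ghnProj p n (e x)).2 = 0}
      one_mem' := hzero_mem
      mul_mem' := by
        intro a b ha hb
        show (ghnProj p n (e (a * b))).2 = 0
        rw [proj_e_mul_snd e he, ha, hb, add_zero]
      inv_mem' := by
        intro a ha
        show (ghnProj p n (e a⁻¹)).2 = 0
        have h1 := proj_e_mul_snd e he a a⁻¹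
        rw [mul_inv_cancel, hzero_mem, ha, zero_add] at h1
        exact h1.symm } with hH
  have hmem : ∀ x : G, x ∈ H ↔ (ghnProj p n (e x)).2 = 0 := fun x => Iff.rfl
  have hdvd : ∀ x : G, x ∈ H → ∀ q : PairIdx n, p ∣ ((e x).2 q).val := by
    intro x hx q
    have h1 : redp p ((e x).2 q) = 0 := congrFun ((hmem x).mp hx) q
    exact (redp_zero_iff p _).mp h1
  refine ⟨H, rfl, ?_, ?_⟩
  · -- the isomorphism with Unp
    set dat : H → Mcar p n := fun x =>
      (fun t => (e x.val).1 t, fun q => pdivp p ((e x.val).2 q)) with hdat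
    have hdat_mul : ∀ x y : H, dat (x * y) = mprodM p n (dat x) (dat y) := by
      intro x y
      refine Prod.ext ?_ ?_
      · funext t
        show (e (x.val * y.val)).1 t = ((dat x).1 + (dat y).1) t
        rw [e_mul_fst e he]
      · funext q
        show pdivp p ((e (x.val * y.val)).2 q)
            = (dat x).2 q + (dat y).2 q
              + (redp p ((dat x).1 q.val.1) * redp p ((dat y).1 q.val.2)
                - redp p ((dat x).1 q.val.2) * redp p ((dat y).1 q.val.1))
        rw [show (e (x.val * y.val)).2 q = (e x.val).2 q + (e y.val).2 q
            + ((((hnBracket p n (ghnProj p n (e x.val)) (ghnProj p n (e y.val))).2 q).val :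
                ZMod (p ^ 2)) * (p : ZMod (p ^ 2)))
          from by rw [e_mul_snd e he]; rfl]
        exact pdivp_key p _ _ _ (hdvd _ x.prop q) (hdvd _ y.prop q)
    have hdat_bij : Function.Bijective dat := by
      constructor
      · intro x y h
        apply Subtype.ext
        apply e.injective
        refine Prod.ext ?_ ?_
        · funext t
          exact congrFun (congrArg Prod.fst h) t
        · funext q
          exact eq_of_pdivp_eq p _ _ (hdvd _ x.prop q) (hdvd _ y.prop q)
            (congrFun (congrArg Prod.snd h) q)
      · rintro ⟨a, c⟩
        set x0 : G := e.symm (a, fun q => ((c q).val : ZMod (p ^ 2)) * (p : ZMod (p ^ 2)))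
          with hx0def
        have hx0 : e x0 = (a, fun q => ((c q).val : ZMod (p ^ 2)) * (p : ZMod (p ^ 2))) :=
          e.apply_symm_apply _
        have hmem0 : x0 ∈ H := by
          rw [hmem]
          funext q
          show redp p ((e x0).2 q) = 0
          rw [hx0]
          exact redp_mul_p p (c q)
        refine ⟨⟨x0, hmem0⟩, ?_⟩
        refine Prod.ext ?_ ?_
        · funext t
          show (e x0).1 t = a t
          rw [hx0]
        · funext q
          show pdivp p ((e x0).2 q) = c q
          rw [hx0]
          exact pdivp_mul_p p (c q)
    have hphi := phiM_bijective EU hodd hUFrattini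
    exact ⟨MulEquiv.mk' (Equiv.ofBijective (phiM EU ∘ dat) (hphi.comp hdat_bij))
      (fun x y => by
        show phiM EU (dat (x * y)) = phiM EU (dat x) * phiM EU (dat y)
        rw [hdat_mul, phiM_mul EU hodd])⟩
  · -- Ω₁ is contained in H
    intro g hg
    have h1 : (p : ℕ) • e g = 0 := by
      rw [← e_pow e he, hg, e_one e he]
    rw [hmem]
    funext q
    show redp p ((e g).2 q) = 0
    apply redp_eq_zero_of_p_smul
    exact congrFun (congrArg Prod.snd h1) q
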